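/- In a flow graph, for every path P and every subpath P' of P (contiguous, with at least one edge), the excess flows satisfy f_{P'} ≥ f_P. In particular this holds for every prefix and every suffix of P containing at least one edge. -/

import Mathlib

/-- A flow graph: a finite DAG with at most one edge between any ordered pair of
vertices, where each edge carries a positive flow value, `f` is zero on non-edges,
and every vertex that is neither a source nor a sink satisfies flow conservation. -/
structure FlowGraph (V : Type) [Fintype V] [DecidableEq V] where
  E : V → V → Prop
  f : V → V → ℚ
  f_pos : ∀ u v, E u v → 0 < f u v
  f_eq_zero : ∀ u v, ¬ E u v → f u v = 0
  acyclic : ∀ v : V, ¬ Relation.TransGen E v v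
  conservation : ∀ v : V, (∃ u, E u v) → (∃ w, E v w) →
    (∑ u, f u v) = (∑ w, f v w)

namespace FlowGraph

variable {V : Type} [Fintype V] [DecidableEq V] (G : FlowGraph V)

/-- Total flow entering `v`. -/
def fin (v : V) : ℚ := ∑ u, G.f u v

/-- Total flow leaving `v`. -/
def fout (v : V) : ℚ := ∑ w, G.f v w

/-- A source has no incoming edges. -/
def IsSource (v : V) : Prop := ∀ u, ¬ G.E u v

/-- A sink has no outgoing edges. -/
def IsSink (v : V) : Prop := ∀ w, ¬ G.E v w

/-- A path: a sequence of at least two vertices joined by edges. -/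
def IsPath (p : List V) : Prop := 2 ≤ p.length ∧ p.Chain' G.E

/-- A path from a source of `G` to a sink of `G`. -/
def IsSourceSinkPath (p : List V) : Prop :=
  G.IsPath p ∧ (∀ s ∈ p.head?, G.IsSource s) ∧ (∀ t ∈ p.getLast?, G.IsSink t)

/-- Total weight of the decomposition entries whose path contains `p` as a
(contiguous) subpath. -/
def coverWeight (G : FlowGraph V) (p : List V) (D : List (List V × ℚ)) : ℚ :=
  (D.map (fun Pw => if p <:+: Pw.1 then Pw.2 else 0)).sum

/-- A flow decomposition: a finite list of source-to-sink paths with positive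
weights such that on every edge the weights of the paths through it sum to the flow. -/
def IsFlowDecomposition (D : List (List V × ℚ)) : Prop :=
  (∀ Pw ∈ D, G.IsSourceSinkPath Pw.1 ∧ 0 < Pw.2) ∧
  (∀ u v : V, G.E u v → G.coverWeight [u, v] D = G.f u v)

/-- `p` is `w`-safe: in every flow decomposition the total weight of the paths
containing `p` as a subpath is at least `w`. -/
def IsWSafe (p : List V) (w : ℚ) : Prop :=
  ∀ D, G.IsFlowDecomposition D → w ≤ G.coverWeight p D

/-- A safe path: a path that is `w`-safe for some `w > 0`. -/
def IsSafe (p : List V) : Prop := G.IsPath p ∧ ∃ w : ℚ, 0 < w ∧ G.IsWSafe p w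

/-- The excess flow of a path `u₁ … u_k` (diverging criterion):
`f(u₁,u₂) − Σ_{i=2}^{k−1} Σ_{x ≠ u_{i+1}} f(u_i, x)`. -/
def excess : List V → ℚ
  | u :: v :: rest =>
      G.f u v - (((v :: rest).zip rest).map
        (fun ab => ∑ x ∈ Finset.univ.erase ab.2, G.f ab.1 x)).sum
  | _ => 0

/-
The excess of `u :: v :: rest` is `f(u,v)` minus the flow leaking off the path at its inner
vertices, where vertex `a` followed by `b` leaks `Σ_{x ≠ b} f(a,x)`. Extending the path at the end
only adds nonnegative leakage. Extending it at the front by an edge `(a,u)` trades `f(u,v)` for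
`f(a,u)` and adds the leak of `u`; by conservation at `u`,
`f(a,u) - leak(u,v) ≤ f_in(u) - leak(u,v) = f_out(u) - leak(u,v) = f(u,v)`.
-/

lemma f_nonneg (u v : V) : 0 ≤ G.f u v := by
  by_cases h : G.E u v
  · exact (G.f_pos u v h).le
  · rw [G.f_eq_zero u v h]

lemma f_le_fin (u v : V) : G.f u v ≤ G.fin v :=
  Finset.single_le_sum (fun x _ => G.f_nonneg x v) (Finset.mem_univ u)

def leak (a b : V) : ℚ := ∑ x ∈ Finset.univ.erase b, G.f a x

lemma leak_nonneg (a b : V) : 0 ≤ G.leak a b :=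
  Finset.sum_nonneg fun x _ => G.f_nonneg a x

lemma f_add_leak (a b : V) : G.f a b + G.leak a b = G.fout a :=
  Finset.add_sum_erase _ _ (Finset.mem_univ b)

def leakage : List V → ℚ
  | a :: b :: t => G.leak a b + leakage (b :: t)
  | _ => 0

lemma leakage_nonneg : ∀ l : List V, 0 ≤ G.leakage l
  | [] | [_] => le_rfl
  | a :: b :: t => add_nonneg (G.leak_nonneg a b) (leakage_nonneg (b :: t))

lemma leakage_le_append : ∀ l r : List V, G.leakage l ≤ G.leakage (l ++ r)
  | [], r => G.leakage_nonneg r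
  | [_], [] => le_rfl
  | [a], b :: t => add_nonneg (G.leak_nonneg a b) (G.leakage_nonneg (b :: t))
  | _ :: b :: t, r => add_le_add_right (leakage_le_append (b :: t) r) _

lemma excess_cons_cons (u v : V) (rest : List V) :
    G.excess (u :: v :: rest) = G.f u v - G.leakage (v :: rest) := by
  suffices h : ∀ (v : V) (rest : List V),
      (((v :: rest).zip rest).map (fun ab => G.leak ab.1 ab.2)).sum = G.leakage (v :: rest) by
    exact congrArg (G.f u v - ·) (h v rest)
  intro v rest
  induction rest generalizing v with
  | nil => rfl
  | cons w t ih => simp only [List.zip_cons_cons, List.map_cons, List.sum_cons, ih, leakage]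

lemma excess_append_le :
    ∀ (p r : List V), 2 ≤ p.length → G.excess (p ++ r) ≤ G.excess p
  | u :: v :: rest, r, _ => by
    simp only [List.cons_append, excess_cons_cons]
    exact sub_le_sub_left (G.leakage_le_append (v :: rest) r) _

lemma excess_cons_le (a : V) :
    ∀ s : List V, 2 ≤ s.length → (a :: s).IsChain G.E → G.excess (a :: s) ≤ G.excess s
  | u :: v :: rest, _, h => by
    have hau : G.E a u := h.rel
    have huv : G.E u v := h.tail.rel
    have hconserve : G.fin u = G.fout u := G.conservation u ⟨a, hau⟩ ⟨v, huv⟩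
    rw [excess_cons_cons, excess_cons_cons, leakage]
    linarith [G.f_le_fin a u, G.f_add_leak u v]

lemma excess_append_left_le (l p : List V) (hp : 2 ≤ p.length) (h : (l ++ p).IsChain G.E) :
    G.excess (l ++ p) ≤ G.excess p := by
  induction l with
  | nil => exact le_rfl
  | cons a l ih =>
    have hlen : 2 ≤ (l ++ p).length := hp.trans (by simp)
    exact (G.excess_cons_le a (l ++ p) hlen h).trans (ih h.tail)

end FlowGraph

open FlowGraph in
/-- for every path `P` and every subpath `P'` of `P` (contiguous, with at
least one edge), the excess flows satisfy `f_{P'} ≥ f_P` (in particular for every prefix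
and suffix of `P` with at least one edge, these being infixes). -/
theorem stmt_5 {V : Type} [Fintype V] [DecidableEq V] (G : FlowGraph V)
    (p q : List V) (hq : G.IsPath q) (hpq : p <:+: q) (hp : 2 ≤ p.length) :
    G.excess q ≤ G.excess p := by
  obtain ⟨l, r, rfl⟩ := hpq
  have hchain : (l ++ (p ++ r)).IsChain G.E := by rw [← List.append_assoc]; exact hq.2
  calc G.excess (l ++ p ++ r) = G.excess (l ++ (p ++ r)) := by rw [List.append_assoc]
    _ ≤ G.excess (p ++ r) := G.excess_append_left_le l (p ++ r) (hp.trans (by simp)) hchain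
    _ ≤ G.excess p := G.excess_append_le p r hp
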